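/- arXiv:1311.6863 — 3 statements merged into one kernel-verified Lean document; each statement's English description precedes it below -/
import Mathlib

section
/- Let M and M' be consistent n×n pairwise comparison matrices, and let B be a set of index pairs (i,j) with i < j such that the associated undirected graph G_B on vertex set {1,...,n} (with an edge {i,j} for each (i,j) ∈ B) is connected. If m_{ij} = m'_{ij} for all (i,j) ∈ B, then M = M'. -/
/-- The graph on `Fin n` associated to a set `B` of index pairs. -/
def genGraph (n : ℕ) (B : Finset (Fin n × Fin n)) : SimpleGraph (Fin n) :=
  SimpleGraph.fromEdgeSet ((fun p : Fin n × Fin n => s(p.1, p.2)) '' (B : Set (Fin n × Fin n)))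

/-- If the graph associated to `B` is connected, then two consistent PC matrices
agreeing on the entries indexed by `B` are equal. -/
theorem consistent_eq_of_connected (n : ℕ) (B : Finset (Fin n × Fin n))
    (hB : ∀ p ∈ B, p.1 < p.2)
    (M M' : Matrix (Fin n) (Fin n) ℝ)
    (hpos : ∀ i j, 0 < M i j) (hcons : ∀ i j k, M i j * M j k = M i k)
    (hpos' : ∀ i j, 0 < M' i j) (hcons' : ∀ i j k, M' i j * M' j k = M' i k)
    (hconn : (genGraph n B).Connected)
    (hagree : ∀ p ∈ B, M p.1 p.2 = M' p.1 p.2) :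
    M = M' := by
  -- diagonal entries are 1
  have hdiag : ∀ i, M i i = 1 := by
    intro i
    have h := hcons i i i
    exact mul_right_cancel₀ (hpos i i).ne' (by rw [h, one_mul])
  have hdiag' : ∀ i, M' i i = 1 := by
    intro i
    have h := hcons' i i i
    exact mul_right_cancel₀ (hpos' i i).ne' (by rw [h, one_mul])
  -- symmetry of agreement
  have hsymm : ∀ i j, M i j = M' i j → M j i = M' j i := by
    intro i j h
    have h1 : M i j * M j i = 1 := by rw [hcons i j i, hdiag]
    have h2 : M' i j * M' j i = 1 := by rw [hcons' i j i, hdiag']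
    have hne : M i j ≠ 0 := (hpos i j).ne'
    have hne' : M' i j ≠ 0 := (hpos' i j).ne'
    have : M j i = (M i j)⁻¹ := eq_inv_of_mul_eq_one_right h1
    have : M' j i = (M' i j)⁻¹ := eq_inv_of_mul_eq_one_right h2
    rw [‹M j i = _›, ‹M' j i = _›, h]
  -- agreement along edges
  have hedge : ∀ i j, (genGraph n B).Adj i j → M i j = M' i j := by
    intro i j hadj
    rw [genGraph, SimpleGraph.fromEdgeSet_adj] at hadj
    obtain ⟨⟨p, hp, hpe⟩, hne⟩ := hadj
    rw [Sym2.eq, Sym2.rel_iff'] at hpe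
    rcases hpe with h | h
    · obtain ⟨h1, h2⟩ := Prod.mk.injEq .. ▸ h
      subst h1; subst h2
      exact hagree p hp
    · have h1 : p.1 = j := congrArg Prod.fst h
      have h2 : p.2 = i := congrArg Prod.snd h
      have := hagree p hp
      rw [h1, h2] at this
      exact hsymm j i this
  -- agreement along walks
  have hwalk : ∀ i j, (genGraph n B).Reachable i j → M i j = M' i j := by
    intro i j hr
    obtain ⟨w⟩ := hr
    induction w with
    | nil => rw [hdiag, hdiag']
    | cons h p ih =>
      rename_i a b c
      calc M a c = M a b * M b c := (hcons a b c).symm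
        _ = M' a b * M' b c := by rw [hedge a b h, ih]
        _ = M' a c := hcons' a b c
  ext i j
  exact hwalk i j (hconn i j)
end

section
/- Let B be a set of index pairs (i,j), 1 ≤ i < j ≤ n, such that the associated graph G_B on {1,...,n} is disconnected (e.g., if |B| ≤ n-2 this may occur). If G_B is disconnected, then there exist two distinct consistent n×n pairwise comparison matrices M and M' that agree on all entries indexed by B. Hence no set B with disconnected G_B determines a consistent PC matrix. -/
/-!
The matrix `(w i / w j)` of a positive weight vector `w` is consistent. Weighting one connected
component of `G_B` by `1` and the rest by `2` gives a consistent matrix whose entries on `B` are `1`,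
like those of the all-ones matrix, but whose entry between two components is `1 / 2`.
-/

open SimpleGraph

section RatioMatrix

variable {ι : Type*}

noncomputable def ratioMatrix (w : ι → ℝ) : Matrix ι ι ℝ := Matrix.of fun i j => w i / w j

lemma ratioMatrix_apply (w : ι → ℝ) (i j : ι) : ratioMatrix w i j = w i / w j := rfl

lemma ratioMatrix_pos {w : ι → ℝ} (hw : ∀ i, 0 < w i) (i j : ι) : 0 < ratioMatrix w i j :=
  div_pos (hw i) (hw j)

lemma ratioMatrix_mul_ratioMatrix {w : ι → ℝ} (hw : ∀ i, w i ≠ 0) (i j k : ι) :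
    ratioMatrix w i j * ratioMatrix w j k = ratioMatrix w i k := by
  rw [ratioMatrix_apply, ratioMatrix_apply, ratioMatrix_apply]
  field_simp [hw j]

lemma ratioMatrix_apply_of_eq {w : ι → ℝ} {i j : ι} (h : w i = w j) (hw : w j ≠ 0) :
    ratioMatrix w i j = 1 :=
  (div_eq_one_iff_eq hw).mpr h

lemma ratioMatrix_one_apply (i j : ι) : ratioMatrix (1 : ι → ℝ) i j = 1 :=
  ratioMatrix_apply_of_eq rfl one_ne_zero

end RatioMatrix

namespace SimpleGraph

variable {V : Type*} (G : SimpleGraph V) (u : V)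

open scoped Classical in
noncomputable def componentWeight : V → ℝ := fun i => if G.Reachable u i then 1 else 2

lemma componentWeight_pos (i : V) : 0 < G.componentWeight u i := by
  unfold componentWeight; split <;> norm_num

lemma componentWeight_self : G.componentWeight u u = 1 :=
  if_pos (Reachable.refl u)

lemma componentWeight_of_not_reachable {v : V} (h : ¬G.Reachable u v) :
    G.componentWeight u v = 2 :=
  if_neg h

lemma componentWeight_eq_of_reachable {i j : V} (h : G.Reachable i j) :
    G.componentWeight u i = G.componentWeight u j := by
  unfold componentWeight
  congr 1
  exact propext ⟨fun hi => hi.trans h, fun hj => hj.trans h.symm⟩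

end SimpleGraph

lemma genGraph_reachable_of_mem {n : ℕ} {B : Finset (Fin n × Fin n)} {p : Fin n × Fin n}
    (hp : p ∈ B) : (genGraph n B).Reachable p.1 p.2 := by
  rcases eq_or_ne p.1 p.2 with h | h
  · exact h ▸ Reachable.refl _
  · exact Adj.reachable ((fromEdgeSet_adj _).mpr ⟨⟨p, hp, rfl⟩, h⟩)

theorem exists_distinct_consistent_of_disconnected_general (n : ℕ) (hn : 1 ≤ n)
    (B : Finset (Fin n × Fin n))
    (hdisc : ¬ (genGraph n B).Connected) :
    ∃ M M' : Matrix (Fin n) (Fin n) ℝ,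
      (∀ i j, 0 < M i j) ∧ (∀ i j k, M i j * M j k = M i k) ∧
      (∀ i j, 0 < M' i j) ∧ (∀ i j k, M' i j * M' j k = M' i k) ∧
      (∀ p ∈ B, M p.1 p.2 = M' p.1 p.2) ∧ M ≠ M' := by
  have : Nonempty (Fin n) := ⟨⟨0, hn⟩⟩
  obtain ⟨u, v, huv⟩ : ∃ u v, ¬(genGraph n B).Reachable u v := by
    simpa [connected_iff, Preconnected] using hdisc
  have hw : ∀ i, (genGraph n B).componentWeight u i ≠ 0 := fun i => (componentWeight_pos _ u i).ne'
  refine ⟨ratioMatrix 1, ratioMatrix ((genGraph n B).componentWeight u),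
    ratioMatrix_pos fun _ => one_pos, ratioMatrix_mul_ratioMatrix fun _ => one_ne_zero,
    ratioMatrix_pos (componentWeight_pos _ u), ratioMatrix_mul_ratioMatrix hw,
    fun p hp => ?_, fun h => ?_⟩
  · rw [ratioMatrix_one_apply, ratioMatrix_apply_of_eq
      (componentWeight_eq_of_reachable _ u (genGraph_reachable_of_mem hp)) (hw _)]
  · have hentry := congrFun (congrFun h u) v
    rw [ratioMatrix_one_apply, ratioMatrix_apply, componentWeight_self,
      componentWeight_of_not_reachable _ _ huv] at hentry
    norm_num at hentry

/-- If the graph associated to `B` is disconnected, then `B` does not determine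
a consistent PC matrix: there are two distinct consistent PC matrices agreeing
on all entries indexed by `B`. -/
theorem exists_distinct_consistent_of_disconnected (n : ℕ) (hn : 1 ≤ n)
    (B : Finset (Fin n × Fin n)) (hB : ∀ p ∈ B, p.1 < p.2)
    (hdisc : ¬ (genGraph n B).Connected) :
    ∃ M M' : Matrix (Fin n) (Fin n) ℝ,
      (∀ i j, 0 < M i j) ∧ (∀ i j k, M i j * M j k = M i k) ∧
      (∀ i j, 0 < M' i j) ∧ (∀ i j k, M' i j * M' j k = M' i k) ∧
      (∀ p ∈ B, M p.1 p.2 = M' p.1 p.2) ∧ M ≠ M' :=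
  exists_distinct_consistent_of_disconnected_general n hn B hdisc
end

section
/- Let B = {(i_1,j_1),...,(i_{n-1},j_{n-1})} be index pairs with i_k < j_k such that G_B is a tree, and let b_1,...,b_{n-1} be the corresponding positive entry values. Then the linear system Σ_{k=i_t}^{j_t - 1} x_k = log b_t (t = 1,...,n-1) in unknowns x_1,...,x_{n-1} has a unique solution. -/
lemma const_of_adj {V : Type*} {G : SimpleGraph V} (hc : G.Connected) (f : V → ℝ)
    (h : ∀ u v, G.Adj u v → f u = f v) (u v : V) : f u = f v := by
  obtain ⟨w⟩ := hc u v
  induction w with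
  | nil => rfl
  | cons a _ ih => exact (h _ _ a).trans ih

/-- If the `n - 1` index pairs `(i t, j t)` form a spanning tree, then the
linear system `∑_{k = i t}^{j t - 1} x k = log (b t)` has a unique solution. -/
theorem linear_system_unique_solution (n : ℕ)
    (i j : Fin (n - 1) → Fin n) (hij : ∀ t, i t < j t)
    (htree : (genGraph n (Finset.univ.image (fun t => (i t, j t)))).IsTree)
    (b : Fin (n - 1) → ℝ) (hb : ∀ t, 0 < b t) :
    ∃! x : Fin (n - 1) → ℝ, ∀ t,
      ∑ k ∈ Finset.univ.filter
          (fun k : Fin (n - 1) => (i t : ℕ) ≤ (k : ℕ) ∧ (k : ℕ) < (j t : ℕ)),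
        x k = Real.log (b t) := by
  classical
  rcases Nat.eq_zero_or_pos n with hn | hn
  · subst hn
    refine ⟨0, fun t => absurd t.2 (by omega), fun x _ => funext fun k => absurd k.2 (by omega)⟩
  set T : (Fin (n-1) → ℝ) →ₗ[ℝ] (Fin (n-1) → ℝ) :=
    { toFun := fun x t => ∑ k ∈ Finset.univ.filter
          (fun k : Fin (n - 1) => (i t : ℕ) ≤ (k : ℕ) ∧ (k : ℕ) < (j t : ℕ)), x k
      map_add' := by intro x y; funext t; simp [Finset.sum_add_distrib]
      map_smul' := by intro c x; funext t; simp [Finset.mul_sum] } with hT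
  -- prefix-sum splitting lemma
  have split : ∀ (x : Fin (n-1) → ℝ) (a c : Fin n), a < c →
      (∑ k ∈ Finset.univ.filter (fun k : Fin (n-1) => (k : ℕ) < (c : ℕ)), x k)
      = (∑ k ∈ Finset.univ.filter (fun k : Fin (n-1) => (k : ℕ) < (a : ℕ)), x k)
        + ∑ k ∈ Finset.univ.filter
            (fun k : Fin (n-1) => (a : ℕ) ≤ (k : ℕ) ∧ (k : ℕ) < (c : ℕ)), x k := by
    intro x a c hac
    rw [← Finset.sum_union]
    · congr 1
      ext k
      simp only [Finset.mem_filter, Finset.mem_union, Finset.mem_univ, true_and]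
      have := Fin.lt_iff_val_lt_val.mp hac
      omega
    · rw [Finset.disjoint_left]
      intro k hk hk'
      simp only [Finset.mem_filter, Finset.mem_univ, true_and] at hk hk'
      omega
  have hinj : Function.Injective T := by
    rw [← LinearMap.ker_eq_bot, LinearMap.ker_eq_bot']
    intro x hx
    have hx' : ∀ t, ∑ k ∈ Finset.univ.filter
          (fun k : Fin (n - 1) => (i t : ℕ) ≤ (k : ℕ) ∧ (k : ℕ) < (j t : ℕ)), x k = 0 :=
      fun t => congrFun hx t
    set y : Fin n → ℝ := fun v =>
      ∑ k ∈ Finset.univ.filter (fun k : Fin (n-1) => (k : ℕ) < (v : ℕ)), x k with hy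
    have hedge : ∀ t, y (i t) = y (j t) := by
      intro t
      rw [hy]
      simp only
      rw [split x (i t) (j t) (hij t), hx' t, add_zero]
    have hadj : ∀ u v, (genGraph n (Finset.univ.image (fun t => (i t, j t)))).Adj u v →
        y u = y v := by
      intro u v huv
      rw [genGraph, SimpleGraph.fromEdgeSet_adj] at huv
      obtain ⟨⟨p, hp, hpe⟩, _⟩ := huv
      simp only [Finset.coe_image, Set.mem_image, Finset.mem_coe, Finset.mem_image,
        Finset.mem_univ, true_and] at hp
      obtain ⟨t, ht⟩ := hp
      subst ht
      rw [Sym2.eq_iff] at hpe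
      rcases hpe with ⟨h1, h2⟩ | ⟨h1, h2⟩
      · rw [← h1, ← h2]; exact hedge t
      · rw [← h1, ← h2]; exact (hedge t).symm
    have hconst := const_of_adj htree.isConnected y hadj
    funext k
    have hk1 : (k : ℕ) + 1 < n := by have := k.2; omega
    have hk0 : (k : ℕ) < n := by omega
    have := hconst ⟨(k : ℕ) + 1, hk1⟩ ⟨(k : ℕ), hk0⟩
    rw [hy] at this
    simp only at this
    have hins : Finset.univ.filter (fun m : Fin (n-1) => (m : ℕ) < (k : ℕ) + 1)
        = insert k (Finset.univ.filter (fun m : Fin (n-1) => (m : ℕ) < (k : ℕ))) := by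
      ext m
      simp only [Finset.mem_filter, Finset.mem_insert, Finset.mem_univ, true_and, Fin.ext_iff]
      omega
    rw [hins, Finset.sum_insert (by simp)] at this
    have : x k = 0 := by linarith
    simpa using this
  have hsurj : Function.Surjective T := (LinearMap.injective_iff_surjective).mp hinj
  obtain ⟨x, hxs⟩ := hsurj (fun t => Real.log (b t))
  refine ⟨x, fun t => congrFun hxs t, ?_⟩
  intro x' hx'
  apply hinj
  rw [hxs]
  funext t
  exact hx' t
end
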